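/- arXiv:1611.08143 — 2 statements merged into one kernel-verified Lean document; each statement's English description precedes it below -/
import Mathlib

section
/- Let 𝕋 be a combinatorial tree forcing with the incompatibility shrinking property. Then every maximal antichain in 𝕋 of size 𝔠 can be refined to a maximal antichain (S_α : α ∈ A), with each S_α below some element of the given antichain, such that [S_α] ∩ [S_β] = ∅ for all α ≠ β in A; in particular, 𝕋 has the disjoint maximal antichain property. -/
/-- The restriction `x↾n` of a sequence `x ∈ ω^ω` to its first `n` values, as a finite sequence. -/
def seqRestrict (x : ℕ → ℕ) (n : ℕ) : List ℕ := List.ofFn fun i : Fin n => x i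

/-- A tree on `ω`: a nonempty set of finite sequences closed under initial segments. -/
def IsSeqTree (T : Set (List ℕ)) : Prop :=
  T.Nonempty ∧ ∀ s ∈ T, ∀ t : List ℕ, t <+: s → t ∈ T

/-- `[T]`, the set of branches of a tree `T ⊆ ω^{<ω}`. -/
def branches (T : Set (List ℕ)) : Set (ℕ → ℕ) := {x | ∀ n : ℕ, seqRestrict x n ∈ T}

/-- `S` and `T` are compatible in `𝕋` (ordered by inclusion) if they have a common extension. -/
def Compat (𝕋 : Set (Set (List ℕ))) (S T : Set (List ℕ)) : Prop :=
  ∃ R ∈ 𝕋, R ⊆ S ∧ R ⊆ T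

/-- A combinatorial tree forcing: a collection `𝕋` of trees on `ω` containing the full tree,
closed under restrictions `T_s`, with large disjoint antichains, and homogeneous. -/
structure CombTreeForcing (𝕋 : Set (Set (List ℕ))) : Prop where
  /-- every member of `𝕋` is a tree -/
  isTree : ∀ T ∈ 𝕋, IsSeqTree T
  /-- (1) `ω^{<ω} ∈ 𝕋` -/
  univ_mem : (Set.univ : Set (List ℕ)) ∈ 𝕋
  /-- (2) closure under subtrees `T_s` -/
  restrict_mem : ∀ T ∈ 𝕋, ∀ s ∈ T, {t ∈ T | s <+: t ∨ t <+: s} ∈ 𝕋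
  /-- (3) large disjoint antichains: a continuous `f : ω^ω → 2^ω` all of whose fibers are
  branch sets of trees in `𝕋` -/
  large_disjoint : ∃ f : (ℕ → ℕ) → (ℕ → Bool), Continuous f ∧
      ∀ x : ℕ → Bool, ∃ T ∈ 𝕋, f ⁻¹' {x} = branches T
  /-- (4) homogeneity: below every `T ∈ 𝕋` there is an order-preserving injective copy
  `i : ω^{<ω} → T` of the full tree inducing a homeomorphism `g : ω^ω → [T]`,
  `g(x) = ⋃_n i(x↾n)`, such that `S ∈ 𝕋` iff the downward closure of `i''S` is in `𝕋`. -/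
  homogeneity : ∀ T ∈ 𝕋, ∃ i : List ℕ → List ℕ,
      Function.Injective i ∧ (∀ s t : List ℕ, s <+: t → i s <+: i t) ∧
      (∀ s : List ℕ, i s ∈ T) ∧
      ∃ g : (ℕ → ℕ) → (ℕ → ℕ),
        (∀ (x : ℕ → ℕ) (n : ℕ),
          i (seqRestrict x n) = seqRestrict (g x) (i (seqRestrict x n)).length) ∧
        Topology.IsEmbedding g ∧ Set.range g = branches T ∧
        ∀ S : Set (List ℕ), IsSeqTree S → (S ∈ 𝕋 ↔ {t | ∃ s ∈ S, t <+: i s} ∈ 𝕋)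

/-- `𝕋` has the disjoint maximal antichain property: there is a maximal antichain
`(T_α : α < 𝔠)` in `𝕋` with `[T_α] ∩ [T_β] = ∅` for `α ≠ β`. -/
def DisjointMaxAntichainProp (𝕋 : Set (Set (List ℕ))) : Prop :=
  ∃ (ι : Type) (Tfam : ι → Set (List ℕ)),
    Cardinal.mk ι = Cardinal.continuum ∧
    (∀ a : ι, Tfam a ∈ 𝕋) ∧
    (∀ a b : ι, a ≠ b → ¬ Compat 𝕋 (Tfam a) (Tfam b)) ∧
    (∀ T ∈ 𝕋, ∃ a : ι, Compat 𝕋 T (Tfam a)) ∧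
    (∀ a b : ι, a ≠ b → branches (Tfam a) ∩ branches (Tfam b) = ∅)

/-- `𝕋` has the incompatibility shrinking property: given `T ∈ 𝕋` and fewer than continuum
many members of `𝕋` each incompatible with `T`, some `T' ≤ T` in `𝕋` has branch set disjoint
from all of their branch sets. -/
def IncompatShrinkingProp (𝕋 : Set (Set (List ℕ))) : Prop :=
  ∀ T ∈ 𝕋, ∀ (ι : Type), Cardinal.mk ι < Cardinal.continuum →
    ∀ S : ι → Set (List ℕ), (∀ a : ι, S a ∈ 𝕋) → (∀ a : ι, ¬ Compat 𝕋 T (S a)) →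
      ∃ T' ∈ 𝕋, T' ⊆ T ∧ ∀ a : ι, branches T' ∩ branches (S a) = ∅


/-!
Enumerate all candidate trees in order type `𝔠` and run a transfinite recursion: at stage `x`,
if the `x`-th tree `R ∈ 𝕋` is incompatible with everything chosen so far, pick `Q ≤ R` below
some member of the given antichain (maximality) and shrink it, by the incompatibility shrinking
property, to a tree whose branches avoid those of the fewer than `𝔠` trees chosen so far. The
chosen trees have pairwise disjoint branch sets, every member of `𝕋` meets one of them, and
since each lies below a unique member of the given antichain there are at least `𝔠` of them.
-/

open Cardinal Set

theorem branches_mono {S T : Set (List ℕ)} (h : S ⊆ T) : branches S ⊆ branches T :=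
  fun _ hx n => h (hx n)

theorem Compat.mono_right {𝕋 : Set (Set (List ℕ))} {R S S' : Set (List ℕ)}
    (h : Compat 𝕋 R S) (hS : S ⊆ S') : Compat 𝕋 R S' := by
  obtain ⟨Q, hQ, hQR, hQS⟩ := h
  exact ⟨Q, hQ, hQR, hQS.trans hS⟩

theorem Compat.symm {𝕋 : Set (Set (List ℕ))} {S T : Set (List ℕ)} (h : Compat 𝕋 S T) :
    Compat 𝕋 T S := by
  obtain ⟨Q, hQ, hQS, hQT⟩ := h
  exact ⟨Q, hQ, hQT, hQS⟩

theorem CombTreeForcing.branches_nonempty {𝕋 : Set (Set (List ℕ))} (hctf : CombTreeForcing 𝕋)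
    {R : Set (List ℕ)} (hR : R ∈ 𝕋) : (branches R).Nonempty := by
  obtain ⟨-, -, -, -, g, -, -, hrange, -⟩ := hctf.homogeneity R hR
  exact ⟨g fun _ => 0, hrange ▸ mem_range_self _⟩

theorem CombTreeForcing.not_compat_of_branches_inter_eq_empty {𝕋 : Set (Set (List ℕ))}
    (hctf : CombTreeForcing 𝕋) {S S' : Set (List ℕ)} (h : branches S ∩ branches S' = ∅) :
    ¬ Compat 𝕋 S S' := by
  rintro ⟨Q, hQ, hQS, hQS'⟩
  obtain ⟨x, hx⟩ := hctf.branches_nonempty hQ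
  exact eq_empty_iff_forall_notMem.1 h x ⟨branches_mono hQS hx, branches_mono hQS' hx⟩

theorem mk_set_list_nat : #(Set (List ℕ)) = 𝔠 := by
  rw [mk_set, mk_list_eq_aleph0, two_power_aleph0]

theorem mk_le_mk_of_refinement {𝕋 : Set (Set (List ℕ))} {ι κ : Type}
    {T : ι → Set (List ℕ)} {S : κ → Set (List ℕ)} (hmem : ∀ a, T a ∈ 𝕋)
    (hanti : ∀ a b, a ≠ b → ¬ Compat 𝕋 (T a) (T b)) (hsub : ∀ b, ∃ a, S b ⊆ T a)
    (hmax : ∀ R ∈ 𝕋, ∃ b, Compat 𝕋 R (S b)) : #ι ≤ #κ := by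
  choose f hf using fun a => hmax (T a) (hmem a)
  choose g hg using hsub
  have h_eq : ∀ a, a = g (f a) := fun a => by
    by_contra hne
    exact hanti _ _ hne ((hf a).mono_right (hg (f a)))
  refine mk_le_of_injective (f := f) fun a a' haa' => ?_
  rw [h_eq a, h_eq a', haa']

namespace DisjointRefinement

variable (𝕋 : Set (Set (List ℕ))) {ι : Type} (T : ι → Set (List ℕ))
  {α : Type} [LinearOrder α] [WellFoundedLT α] (e : α → Set (List ℕ))

/-- `S` may be chosen at stage `R` when the trees `prev` have been chosen before. -/
def IsAdmissible (prev : Set (Set (List ℕ))) (R S : Set (List ℕ)) : Prop :=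
  S ∈ 𝕋 ∧ S ⊆ R ∧ (∃ a, S ⊆ T a) ∧ ∀ S' ∈ prev, branches S ∩ branches S' = ∅

open Classical in
/-- `none` means that no tree is chosen at stage `x`. -/
noncomputable def step (x : α) (prev : ∀ y, y < x → Option (Set (List ℕ))) :
    Option (Set (List ℕ)) :=
  let P := {S | ∃ y, ∃ hy : y < x, prev y hy = some S}
  if h : (∀ S ∈ P, ¬ Compat 𝕋 S (e x)) ∧ ∃ S, IsAdmissible 𝕋 T P (e x) S then
    some h.2.choose
  else none

noncomputable def choice : α → Option (Set (List ℕ)) :=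
  WellFoundedLT.fix (step 𝕋 T e)

def chosenBefore (x : α) : Set (Set (List ℕ)) :=
  {S | ∃ y, ∃ _ : y < x, choice 𝕋 T e y = some S}

def chosen : Set (Set (List ℕ)) :=
  {S | ∃ x, choice 𝕋 T e x = some S}

open Classical in
theorem choice_eq (x : α) :
    choice 𝕋 T e x =
      if h : (∀ S ∈ chosenBefore 𝕋 T e x, ¬ Compat 𝕋 S (e x)) ∧
          ∃ S, IsAdmissible 𝕋 T (chosenBefore 𝕋 T e x) (e x) S then
        some h.2.choose
      else none :=
  WellFoundedLT.fix_eq (step 𝕋 T e) x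

variable {𝕋 T e}

theorem isAdmissible_of_choice_eq_some {x : α} {S : Set (List ℕ)}
    (h : choice 𝕋 T e x = some S) : IsAdmissible 𝕋 T (chosenBefore 𝕋 T e x) (e x) S := by
  rw [choice_eq] at h
  split_ifs at h with hx
  exact Option.some.inj h ▸ hx.2.choose_spec

theorem mk_chosenBefore_lt (he : ∀ x : α, #(Iio x) < 𝔠) (x : α) :
    #(chosenBefore 𝕋 T e x) < 𝔠 := by
  have hsub : chosenBefore 𝕋 T e x ⊆ (fun y => (choice 𝕋 T e y).getD ∅) '' Iio x := by
    rintro S ⟨y, hy, hS⟩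
    exact ⟨y, hy, by simp [hS]⟩
  exact ((mk_le_mk_of_subset hsub).trans mk_image_le).trans_lt (he x)

theorem exists_isAdmissible (hshrink : IncompatShrinkingProp 𝕋)
    (hmax : ∀ R ∈ 𝕋, ∃ a, Compat 𝕋 R (T a)) (he : ∀ x : α, #(Iio x) < 𝔠) {x : α}
    (hx : e x ∈ 𝕋) (hinc : ∀ S ∈ chosenBefore 𝕋 T e x, ¬ Compat 𝕋 S (e x)) :
    ∃ S, IsAdmissible 𝕋 T (chosenBefore 𝕋 T e x) (e x) S := by
  obtain ⟨a, Q, hQ, hQx, hQa⟩ := hmax (e x) hx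
  have hQinc : ∀ S : chosenBefore 𝕋 T e x, ¬ Compat 𝕋 Q S := fun S hQS =>
    hinc S S.2 (hQS.symm.mono_right hQx)
  obtain ⟨S, hS, hSQ, hdisj⟩ := hshrink Q hQ _ (mk_chosenBefore_lt he x) Subtype.val
    (fun S => (isAdmissible_of_choice_eq_some S.2.choose_spec.choose_spec).1) hQinc
  exact ⟨S, hS, hSQ.trans hQx, ⟨a, hSQ.trans hQa⟩, fun S' hS' => hdisj ⟨S', hS'⟩⟩

theorem exists_chosen_compat (hshrink : IncompatShrinkingProp 𝕋)
    (hmax : ∀ R ∈ 𝕋, ∃ a, Compat 𝕋 R (T a)) (he : ∀ x : α, #(Iio x) < 𝔠) {x : α}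
    (hx : e x ∈ 𝕋) : ∃ S ∈ chosen 𝕋 T e, Compat 𝕋 (e x) S := by
  by_cases hinc : ∀ S ∈ chosenBefore 𝕋 T e x, ¬ Compat 𝕋 S (e x)
  · obtain ⟨S, hS⟩ : ∃ S, choice 𝕋 T e x = some S := by
      rw [choice_eq, dif_pos ⟨hinc, exists_isAdmissible hshrink hmax he hx hinc⟩]
      exact ⟨_, rfl⟩
    obtain ⟨hSmem, hSx, -⟩ := isAdmissible_of_choice_eq_some hS
    exact ⟨S, ⟨x, hS⟩, S, hSmem, hSx, subset_rfl⟩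
  · push Not at hinc
    obtain ⟨S, ⟨y, -, hy⟩, hSx⟩ := hinc
    exact ⟨S, ⟨y, hy⟩, hSx.symm⟩

theorem chosen_pairwise_disjoint :
    (chosen 𝕋 T e).Pairwise fun S S' => branches S ∩ branches S' = ∅ := by
  rintro S ⟨x, hx⟩ S' ⟨x', hx'⟩ hne
  rcases lt_trichotomy x x' with hlt | rfl | hlt
  · rw [inter_comm]
    exact (isAdmissible_of_choice_eq_some hx').2.2.2 S ⟨x, hlt, hx⟩
  · exact absurd (Option.some.inj (hx.symm.trans hx')) hne
  · exact (isAdmissible_of_choice_eq_some hx).2.2.2 S' ⟨x', hlt, hx'⟩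

end DisjointRefinement

open DisjointRefinement in
theorem exists_pairwise_disjoint_maximal_refinement {𝕋 : Set (Set (List ℕ))} {ι : Type}
    {T : ι → Set (List ℕ)} (hshrink : IncompatShrinkingProp 𝕋)
    (hmax : ∀ R ∈ 𝕋, ∃ a, Compat 𝕋 R (T a)) :
    ∃ 𝒮 : Set (Set (List ℕ)), 𝒮 ⊆ 𝕋 ∧ (∀ S ∈ 𝒮, ∃ a, S ⊆ T a) ∧
      (∀ R ∈ 𝕋, ∃ S ∈ 𝒮, Compat 𝕋 R S) ∧
      𝒮.Pairwise fun S S' => branches S ∩ branches S' = ∅ := by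
  obtain ⟨e⟩ : Nonempty ((𝔠).ord.ToType ≃ Set (List ℕ)) :=
    Cardinal.eq.1 (by simp)
  have he (x : (𝔠).ord.ToType) : #(Iio x) < 𝔠 := by simpa using mk_Iio_lt x (by simp)
  refine ⟨chosen 𝕋 T e, fun S ⟨_, hS⟩ => (isAdmissible_of_choice_eq_some hS).1,
    fun S ⟨_, hS⟩ => (isAdmissible_of_choice_eq_some hS).2.2.1, fun R hR => ?_,
    chosen_pairwise_disjoint⟩
  obtain ⟨x, rfl⟩ := e.surjective R
  exact exists_chosen_compat hshrink hmax he hR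

/-- If a combinatorial tree forcing `𝕋` has the incompatibility shrinking property, then any
maximal antichain of size `𝔠` in `𝕋` can be refined to a disjoint maximal antichain (of size
`𝔠`, each member below some member of the given antichain); in particular `𝕋` has the
disjoint maximal antichain property. -/
theorem disjointMaxAntichain_of_incompatShrinking (𝕋 : Set (Set (List ℕ)))
    (hctf : CombTreeForcing 𝕋) (hshrink : IncompatShrinkingProp 𝕋)
    (ι : Type) (T : ι → Set (List ℕ)) (hcard : Cardinal.mk ι = Cardinal.continuum)
    (hmem : ∀ a : ι, T a ∈ 𝕋)
    (hanti : ∀ a b : ι, a ≠ b → ¬ Compat 𝕋 (T a) (T b))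
    (hmax : ∀ R ∈ 𝕋, ∃ a : ι, Compat 𝕋 R (T a)) :
    (∃ (κ : Type) (S : κ → Set (List ℕ)),
      Cardinal.mk κ = Cardinal.continuum ∧
      (∀ b : κ, S b ∈ 𝕋) ∧
      (∀ b : κ, ∃ a : ι, S b ⊆ T a) ∧
      (∀ b c : κ, b ≠ c → ¬ Compat 𝕋 (S b) (S c)) ∧
      (∀ R ∈ 𝕋, ∃ b : κ, Compat 𝕋 R (S b)) ∧
      (∀ b c : κ, b ≠ c → branches (S b) ∩ branches (S c) = ∅)) ∧
    DisjointMaxAntichainProp 𝕋 := by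
  obtain ⟨𝒮, h𝒮𝕋, h𝒮T, h𝒮max, h𝒮disj⟩ :=
    exists_pairwise_disjoint_maximal_refinement hshrink hmax
  have hmem' (S : 𝒮) : S.1 ∈ 𝕋 := h𝒮𝕋 S.2
  have hsub (S : 𝒮) : ∃ a, S.1 ⊆ T a := h𝒮T S S.2
  have hmax' (R) (hR : R ∈ 𝕋) : ∃ S : 𝒮, Compat 𝕋 R S := by
    obtain ⟨S, hS, hRS⟩ := h𝒮max R hR
    exact ⟨⟨S, hS⟩, hRS⟩
  have hdisj (S S' : 𝒮) (hne : S ≠ S') : branches S ∩ branches S' = ∅ :=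
    h𝒮disj S.2 S'.2 (Subtype.val_injective.ne hne)
  have hinc (S S' : 𝒮) (hne : S ≠ S') : ¬ Compat 𝕋 S S' :=
    hctf.not_compat_of_branches_inter_eq_empty (hdisj S S' hne)
  have hcard𝒮 : #𝒮 = 𝔠 :=
    le_antisymm ((mk_set_le 𝒮).trans mk_set_list_nat.le)
      (hcard ▸ mk_le_mk_of_refinement hmem hanti hsub hmax')
  exact ⟨⟨𝒮, Subtype.val, hcard𝒮, hmem', hsub, hinc, hmax', hdisj⟩,
    ⟨𝒮, Subtype.val, hcard𝒮, hmem', hinc, hmax', hdisj⟩⟩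
end

section
/- Assume 𝔟 = 𝔠. Then Laver forcing has the incompatibility shrinking property: for every Laver tree T, every cardinal μ < 𝔠, and every family (S_α : α < μ) of Laver trees each incompatible with T, there is a Laver tree T' ⊆ T such that [T'] ∩ [S_α] = ∅ for all α < μ. -/
/-- `T` is a Laver tree with stem `st`: `st ∈ T` is comparable with every node of `T`, and
every node extending `st` has infinitely many immediate successors in `T`. -/
def IsLaverWithStem (T : Set (List ℕ)) (st : List ℕ) : Prop :=
  IsSeqTree T ∧ st ∈ T ∧ (∀ t ∈ T, t <+: st ∨ st <+: t) ∧
    ∀ t ∈ T, st <+: t → {n : ℕ | t ++ [n] ∈ T}.Infinite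

/-- A Laver tree. -/
def IsLaver (T : Set (List ℕ)) : Prop := ∃ st : List ℕ, IsLaverWithStem T st

/-- The bounding number `𝔟`: the least cardinality of a family `F ⊆ ω^ω` unbounded with
respect to eventual domination `≤*`. -/
noncomputable def boundingNumber : Cardinal :=
  sInf {c : Cardinal | ∃ F : Set (ℕ → ℕ), Cardinal.mk F = c ∧
    ∀ f : ℕ → ℕ, ∃ g ∈ F, ¬ (∀ᶠ n in Filter.atTop, g n ≤ f n)}

/-!
Fix `a` and let `P = T ∩ S a`. Since `P` contains no Laver tree, the Laver derivative of `P`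
(transfinitely discarding nodes with only finitely many surviving successors) exhausts `P`, and the
stage at which a node is discarded is an ordinal rank with the following property: above some bound
`B_a(t)`, every successor of `t` in `P` has smaller rank. Hence no branch of `P` eventually stays
above `B_a`. Fewer than `𝔟` functions on the countable set `ω^{<ω}` are dominated mod finite by a
single `h`, and the subtree of `T` whose steps `t⌢n` above the stem all satisfy `n ≥ h t` is still a
Laver tree, with no branch in common with any `S a`.
-/

open Filter

theorem seqRestrict_length (x : ℕ → ℕ) (n : ℕ) : (seqRestrict x n).length = n :=
  List.length_ofFn

theorem seqRestrict_succ (x : ℕ → ℕ) (n : ℕ) :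
    seqRestrict x (n + 1) = seqRestrict x n ++ [x n] := by
  rw [seqRestrict, seqRestrict, List.ofFn_succ']
  simp

theorem seqRestrict_injective (x : ℕ → ℕ) : Function.Injective (seqRestrict x) := fun m n h => by
  simpa only [seqRestrict_length] using congrArg List.length h

noncomputable def laverDeriv (P : Set (List ℕ)) (o : Ordinal.{0}) : Set (List ℕ) :=
  {t | t ∈ P ∧ ∀ o' < o, {n : ℕ | t ++ [n] ∈ laverDeriv P o'}.Infinite}
termination_by o

def laverKernel (P : Set (List ℕ)) : Set (List ℕ) := ⋂ o, laverDeriv P o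

noncomputable def laverRank (P : Set (List ℕ)) (t : List ℕ) : Ordinal.{0} :=
  sInf {o | t ∉ laverDeriv P o}

section LaverDeriv

variable (P : Set (List ℕ))

theorem laverDeriv_eq (o : Ordinal.{0}) :
    laverDeriv P o = {t | t ∈ P ∧ ∀ o' < o, {n : ℕ | t ++ [n] ∈ laverDeriv P o'}.Infinite} := by
  rw [laverDeriv]

theorem laverDeriv_subset (o : Ordinal.{0}) : laverDeriv P o ⊆ P := fun t ht => by
  rw [laverDeriv_eq] at ht
  exact ht.1

theorem laverDeriv_antitone : Antitone (laverDeriv P) := fun o o' hoo' t ht => by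
  rw [laverDeriv_eq] at ht ⊢
  exact ⟨ht.1, fun o'' ho'' => ht.2 o'' (ho''.trans_le hoo')⟩

theorem infinite_succ_mem_laverKernel {t : List ℕ} (ht : t ∈ laverKernel P) :
    {n : ℕ | t ++ [n] ∈ laverKernel P}.Infinite := by
  have hdrop : ∀ n, t ++ [n] ∉ laverKernel P → ∃ o, t ++ [n] ∉ laverDeriv P o := by
    simp [laverKernel]
  choose! w hw using hdrop
  -- past the stage `σ` every successor of `t` outside the kernel has already been discarded
  set σ := ⨆ n, w n
  have hσ : {n : ℕ | t ++ [n] ∈ laverDeriv P σ}.Infinite := by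
    have h := Set.mem_iInter.1 ht (Order.succ σ)
    rw [laverDeriv_eq] at h
    exact h.2 σ (Order.lt_succ σ)
  refine hσ.mono fun n hn => ?_
  by_contra hnK
  exact hw n hnK (laverDeriv_antitone P (Ordinal.le_iSup w n) hn)

theorem exists_laverRank_append_lt {t : List ℕ} (ht : t ∈ P) (htK : t ∉ laverKernel P) :
    ∃ N, ∀ n ≥ N, t ++ [n] ∈ P → laverRank P (t ++ [n]) < laverRank P t := by
  have hdrop : {o | t ∉ laverDeriv P o}.Nonempty := by
    simpa [laverKernel, Set.Nonempty] using htK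
  have hrank : t ∉ laverDeriv P (laverRank P t) := csInf_mem hdrop
  simp only [laverDeriv_eq P (laverRank P t), Set.mem_ofPred_eq, not_and, not_forall,
    Set.not_infinite] at hrank
  obtain ⟨o, ho, hfin⟩ := hrank ht
  obtain ⟨N, hN⟩ := hfin.bddAbove
  refine ⟨N + 1, fun n hn _ => ?_⟩
  have hno : t ++ [n] ∉ laverDeriv P o := fun h => by
    have := hN h
    omega
  exact (csInf_le' hno).trans_lt ho

theorem exists_frequently_lt_of_laverKernel_eq_empty (hK : laverKernel P = ∅) :
    ∃ B : List ℕ → ℕ, ∀ x ∈ branches P, ∃ᶠ n in atTop, x n < B (seqRestrict x n) := by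
  choose! B hB using fun t (ht : t ∈ P) =>
    exists_laverRank_append_lt P ht (hK ▸ Set.notMem_empty t)
  refine ⟨B, fun x hx => ?_⟩
  by_contra hlt
  obtain ⟨N, hN⟩ := eventually_atTop.1 (not_frequently.1 hlt)
  refine not_strictAnti_of_wellFoundedLT (fun k => laverRank P (seqRestrict x (N + k)))
    (strictAnti_nat_of_succ_lt fun k => ?_)
  have hstep := hB _ (hx (N + k)) (x (N + k)) (not_lt.1 (hN (N + k) (by omega)))
  rw [← seqRestrict_succ] at hstep
  exact hstep (hx _)

end LaverDeriv

def laverSubtree (K : Set (List ℕ)) (t₀ : List ℕ) : Set (List ℕ) :=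
  {s | s <+: t₀ ∨ t₀ <+: s ∧ ∀ u, t₀ <+: u → u <+: s → u ∈ K}

theorem mem_of_prefix_mem_laverSubtree {K : Set (List ℕ)} {t₀ s u : List ℕ} (ht₀ : t₀ ∈ K)
    (hs : s ∈ laverSubtree K t₀) (htu : t₀ <+: u) (hus : u <+: s) : u ∈ K := by
  rcases hs with hs | hs
  · have hut : u <+: t₀ := hus.trans hs
    rwa [hut.eq_of_length (le_antisymm hut.length_le htu.length_le)]
  · exact hs.2 u htu hus

theorem isLaverWithStem_laverSubtree {K : Set (List ℕ)}
    (hK : ∀ t ∈ K, {n : ℕ | t ++ [n] ∈ K}.Infinite) {t₀ : List ℕ} (ht₀ : t₀ ∈ K) :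
    IsLaverWithStem (laverSubtree K t₀) t₀ := by
  refine ⟨⟨⟨t₀, Or.inl (List.prefix_refl t₀)⟩, fun s hs u hus => ?_⟩, Or.inl (List.prefix_refl t₀),
    fun s hs => hs.imp id And.left, fun s hs hts => ?_⟩
  · rcases hs with hs | hs
    · exact Or.inl (hus.trans hs)
    · exact (List.prefix_or_prefix_of_prefix hus hs.1).imp id
        fun htu => ⟨htu, fun v hv hvu => hs.2 v hv (hvu.trans hus)⟩
  · refine (hK s (mem_of_prefix_mem_laverSubtree ht₀ hs hts (List.prefix_refl s))).mono
      fun n hn => Or.inr ⟨hts.trans (List.prefix_append s [n]), fun u htu hus => ?_⟩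
    rcases List.prefix_concat_iff.1 hus with rfl | hus
    · exact hn
    · exact mem_of_prefix_mem_laverSubtree ht₀ hs htu hus

theorem laverKernel_eq_empty {P : Set (List ℕ)} (hP : ∀ s ∈ P, ∀ t : List ℕ, t <+: s → t ∈ P)
    (h : ¬∃ R, IsLaver R ∧ R ⊆ P) : laverKernel P = ∅ := by
  refine Set.eq_empty_of_forall_notMem fun t₀ ht₀ => h ⟨laverSubtree (laverKernel P) t₀,
    ⟨t₀, isLaverWithStem_laverSubtree (fun _ => infinite_succ_mem_laverKernel P) ht₀⟩, ?_⟩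
  have hKP : laverKernel P ⊆ P := (Set.iInter_subset _ 0).trans (laverDeriv_subset P 0)
  rintro s (hs | hs)
  · exact hP t₀ (hKP ht₀) s hs
  · exact hKP (hs.2 s hs.1 (List.prefix_refl s))

def pruneTree (T : Set (List ℕ)) (k : ℕ) (h : List ℕ → ℕ) : Set (List ℕ) :=
  {t | t ∈ T ∧ ∀ u n, k ≤ u.length → u ++ [n] <+: t → h u ≤ n}

section PruneTree

variable {T : Set (List ℕ)} {k : ℕ} {h : List ℕ → ℕ}

theorem pruneTree_subset : pruneTree T k h ⊆ T := fun _ ht => ht.1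

theorem isLaverWithStem_pruneTree {st : List ℕ} (hT : IsLaverWithStem T st) :
    IsLaverWithStem (pruneTree T st.length h) st := by
  obtain ⟨hTtree, hstT, hcomp, hsplit⟩ := hT
  have hst : st ∈ pruneTree T st.length h := ⟨hstT, fun u n hu hun => by
    have := hun.length_le
    simp only [List.length_append, List.length_singleton] at this
    omega⟩
  refine ⟨⟨⟨st, hst⟩, fun s hs t hts => ⟨hTtree.2 s hs.1 t hts,
    fun u n hu hun => hs.2 u n hu (hun.trans hts)⟩⟩, hst, fun t ht => hcomp t ht.1,
    fun t ht hstt => ?_⟩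
  refine ((hsplit t ht.1 hstt).sdiff (Set.finite_Iio (h t))).mono fun n hn =>
    ⟨hn.1, fun u m hu hum => ?_⟩
  rcases List.prefix_concat_iff.1 hum with hum | hum
  · obtain ⟨rfl, ⟨⟩⟩ := List.append_inj' hum rfl
    exact not_lt.1 hn.2
  · exact ht.2 u m hu hum

theorem le_of_mem_branches_pruneTree {x : ℕ → ℕ} (hx : x ∈ branches (pruneTree T k h))
    {n : ℕ} (hn : k ≤ n) : h (seqRestrict x n) ≤ x n :=
  (hx (n + 1)).2 _ _ (by rwa [seqRestrict_length]) (seqRestrict_succ x n ▸ List.prefix_refl _)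

end PruneTree

theorem exists_forall_eventually_le_of_mk_lt_boundingNumber {ι : Type}
    (hcard : Cardinal.mk ι < boundingNumber) (g : ι → ℕ → ℕ) :
    ∃ f : ℕ → ℕ, ∀ a, ∀ᶠ n in atTop, g a n ≤ f n := by
  by_contra hunb
  simp only [not_exists, not_forall] at hunb
  have hbound : boundingNumber ≤ Cardinal.mk (Set.range g) :=
    csInf_le' ⟨Set.range g, rfl, fun f => let ⟨a, ha⟩ := hunb f; ⟨g a, ⟨a, rfl⟩, ha⟩⟩
  exact hcard.not_ge (hbound.trans Cardinal.mk_range_le)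

theorem exists_forall_cofinite_le_of_mk_lt_boundingNumber {ι : Type} {α : Type*} [Denumerable α]
    (hcard : Cardinal.mk ι < boundingNumber) (g : ι → α → ℕ) :
    ∃ f : α → ℕ, ∀ a, ∀ᶠ t in cofinite, g a t ≤ f t := by
  obtain ⟨f, hf⟩ := exists_forall_eventually_le_of_mk_lt_boundingNumber hcard
    fun a n => g a (Denumerable.ofNat α n)
  refine ⟨f ∘ Encodable.encode, fun a => ?_⟩
  have hfa := (Encodable.encode_injective (α := α)).tendsto_cofinite.eventually
    (Nat.cofinite_eq_atTop ▸ hf a)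
  simpa only [Function.comp_apply, Denumerable.ofNat_encode] using hfa

/-- Assuming `𝔟 = 𝔠`, Laver forcing has the incompatibility shrinking property: for every
Laver tree `T` and every family of fewer than continuum many Laver trees each incompatible
with `T`, there is a Laver tree `T' ⊆ T` whose branch set avoids all their branch sets. -/
theorem laver_incompatShrinking_of_b_eq_c (hb : boundingNumber = Cardinal.continuum)
    (T : Set (List ℕ)) (hT : IsLaver T)
    (ι : Type) (hcard : Cardinal.mk ι < Cardinal.continuum)
    (S : ι → Set (List ℕ)) (hS : ∀ a : ι, IsLaver (S a))
    (hincompat : ∀ a : ι, ¬ ∃ R : Set (List ℕ), IsLaver R ∧ R ⊆ T ∧ R ⊆ S a) :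
    ∃ T' : Set (List ℕ), IsLaver T' ∧ T' ⊆ T ∧
      ∀ a : ι, branches T' ∩ branches (S a) = ∅ := by
  obtain ⟨st, hst⟩ := hT
  have hTS a : ∀ s ∈ T ∩ S a, ∀ t : List ℕ, t <+: s → t ∈ T ∩ S a := by
    obtain ⟨_, hSa, -⟩ := hS a
    exact fun s hs t hts => ⟨hst.1.2 s hs.1 t hts, hSa.2 s hs.2 t hts⟩
  choose B hB using fun a => exists_frequently_lt_of_laverKernel_eq_empty _ <|
    laverKernel_eq_empty (hTS a) fun ⟨R, hR, hRTS⟩ =>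
      hincompat a ⟨R, hR, hRTS.trans Set.inter_subset_left, hRTS.trans Set.inter_subset_right⟩
  obtain ⟨h, hh⟩ := exists_forall_cofinite_le_of_mk_lt_boundingNumber (hb ▸ hcard) B
  refine ⟨pruneTree T st.length h, ⟨st, isLaverWithStem_pruneTree hst⟩, pruneTree_subset,
    fun a => Set.eq_empty_of_forall_notMem fun x ⟨hxT', hxS⟩ => ?_⟩
  have hBh : ∀ᶠ n in atTop, B a (seqRestrict x n) ≤ h (seqRestrict x n) :=
    (Nat.cofinite_eq_atTop ▸ (seqRestrict_injective x).tendsto_cofinite).eventually (hh a)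
  have hhx : ∀ᶠ n in atTop, h (seqRestrict x n) ≤ x n :=
    eventually_atTop.2 ⟨_, fun n => le_of_mem_branches_pruneTree hxT'⟩
  obtain ⟨n, hlt, hle⟩ := ((hB a x fun n => ⟨pruneTree_subset (hxT' n), hxS n⟩).and_eventually
    (hBh.and hhx)).exists
  exact (hle.1.trans hle.2).not_gt hlt
end
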